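/- arXiv:1404.6112 — 3 statements merged into one kernel-verified Lean document; each statement's English description precedes it below -/
import Mathlib

section
/- (Theorem: union of stability regions) Fix channel success probabilities f_pd, f_ps, f_sd ∈ (0,1) with f_pd < f_sd. For p_q ∈ (0,1) and p_a ∈ (0,1], let R(p_q,p_a) = { (λ_p, λ_s) ∈ ℝ² : 0 < λ_p < Λ_p(p_q,p_a) and 0 < λ_s < Λ_s(λ_p,p_q,p_a) }. Then the union of R(p_q,p_a) over all p_q ∈ (0,1) and p_a ∈ (0,1] equals { (λ_p, λ_s) ∈ ℝ² : λ_p > 0, λ_s > 0, and λ_s < f_sd − ((f_sd + f_ps·(1−f_pd))/(f_pd + f_ps·(1−f_pd)))·λ_p }. -/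
/-- Service rate of the primary queue μ_p(p_a). -/
def primaryServiceRate (f_pd f_ps p_a : ℝ) : ℝ :=
  f_pd + p_a * f_ps * (1 - f_pd)

/-- Maximum achievable primary arrival rate Λ_p(p_q, p_a). -/
noncomputable def maxPrimaryRate (f_pd f_ps f_sd p_q p_a : ℝ) : ℝ :=
  f_sd * (1 - p_q) * primaryServiceRate f_pd f_ps p_a /
    (f_sd * (1 - p_q) + p_a * f_ps * (1 - f_pd))

/-- Maximum achievable secondary arrival rate Λ_s(λ_p, p_q, p_a). -/
noncomputable def maxSecondaryRate (f_pd f_ps f_sd lp p_q p_a : ℝ) : ℝ :=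
  p_q * f_sd * (1 - lp / primaryServiceRate f_pd f_ps p_a)

/-- Stability region for a fixed pair (p_q, p_a). -/
noncomputable def stabilityRegion (f_pd f_ps f_sd p_q p_a : ℝ) : Set (ℝ × ℝ) :=
  {l : ℝ × ℝ | 0 < l.1 ∧ l.1 < maxPrimaryRate f_pd f_ps f_sd p_q p_a ∧
    0 < l.2 ∧ l.2 < maxSecondaryRate f_pd f_ps f_sd l.1 p_q p_a}

/-!
For a fixed admission probability `p_a`, write `b = p_a f_ps (1 - f_pd)` and `μ = f_pd + b`.
Eliminating `p_q` from the two constraints `λ_p < Λ_p` and `λ_s < Λ_s` shows that the union of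
the regions `R(p_q, p_a)` over `p_q ∈ (0,1)` is the open triangle under the line
`λ_s = f_sd - (f_sd + b) / μ · λ_p`. All these triangles share the vertex `(0, f_sd)`, and since
`f_pd < f_sd` the slope `(f_sd + b) / (f_pd + b)` decreases as `b` grows, so the triangles increase
with `p_a` and their union is the one at `p_a = 1`.
-/

noncomputable def stabilityTriangle (f_pd f_ps f_sd p_a : ℝ) : Set (ℝ × ℝ) :=
  {l : ℝ × ℝ | 0 < l.1 ∧ 0 < l.2 ∧
    l.2 < f_sd - (f_sd + p_a * f_ps * (1 - f_pd)) / primaryServiceRate f_pd f_ps p_a * l.1}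

lemma add_div_add_le_add_div_add {f s b b' : ℝ} (hf : 0 < f) (hfs : f ≤ s) (hb : 0 ≤ b)
    (hbb' : b ≤ b') : (s + b') / (f + b') ≤ (s + b) / (f + b) := by
  rw [div_le_div_iff₀ (by linarith) (by linarith)]
  nlinarith [mul_nonneg (sub_nonneg.2 hbb') (sub_nonneg.2 hfs)]

lemma stabilityTriangle_mono {f_pd f_ps f_sd p_a p_a' : ℝ} (hpd : 0 < f_pd) (hpd1 : f_pd ≤ 1)
    (hps : 0 ≤ f_ps) (hlt : f_pd ≤ f_sd) (hpa : 0 ≤ p_a) (hpa' : p_a ≤ p_a') :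
    stabilityTriangle f_pd f_ps f_sd p_a ⊆ stabilityTriangle f_pd f_ps f_sd p_a' := by
  rintro ⟨x, y⟩ ⟨hx, hy, hline⟩
  have hb : 0 ≤ p_a * f_ps * (1 - f_pd) := by have := sub_nonneg.2 hpd1; positivity
  have hbb' : p_a * f_ps * (1 - f_pd) ≤ p_a' * f_ps * (1 - f_pd) := by
    have := sub_nonneg.2 hpd1; gcongr
  refine ⟨hx, hy, hline.trans_le ?_⟩
  have := add_div_add_le_add_div_add hpd hlt hb hbb'
  unfold primaryServiceRate
  gcongr

section FixedAdmission

variable {f_pd f_ps f_sd p_a : ℝ}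

lemma mem_stabilityTriangle_iff (hμ : 0 < primaryServiceRate f_pd f_ps p_a) {l : ℝ × ℝ} :
    l ∈ stabilityTriangle f_pd f_ps f_sd p_a ↔ 0 < l.1 ∧ 0 < l.2 ∧
      l.2 * primaryServiceRate f_pd f_ps p_a + l.1 * (p_a * f_ps * (1 - f_pd))
        < f_sd * (primaryServiceRate f_pd f_ps p_a - l.1) := by
  have hline : f_sd - (f_sd + p_a * f_ps * (1 - f_pd)) / primaryServiceRate f_pd f_ps p_a * l.1
      = (f_sd * (primaryServiceRate f_pd f_ps p_a - l.1) - l.1 * (p_a * f_ps * (1 - f_pd)))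
        / primaryServiceRate f_pd f_ps p_a := by
    rw [eq_div_iff hμ.ne']
    field_simp
    ring
  simp only [stabilityTriangle, Set.mem_ofPred_eq]
  rw [hline, lt_div_iff₀ hμ, lt_sub_iff_add_lt]

lemma mem_stabilityRegion_iff (hsd : 0 < f_sd) (hb : 0 ≤ p_a * f_ps * (1 - f_pd))
    (hμ : 0 < primaryServiceRate f_pd f_ps p_a) {p_q : ℝ} (hq : p_q < 1) {l : ℝ × ℝ} :
    l ∈ stabilityRegion f_pd f_ps f_sd p_q p_a ↔ 0 < l.1 ∧
      l.1 * (p_a * f_ps * (1 - f_pd))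
        < (1 - p_q) * (f_sd * (primaryServiceRate f_pd f_ps p_a - l.1)) ∧
      0 < l.2 ∧ l.2 * primaryServiceRate f_pd f_ps p_a
        < p_q * (f_sd * (primaryServiceRate f_pd f_ps p_a - l.1)) := by
  have hD : 0 < f_sd * (1 - p_q) + p_a * f_ps * (1 - f_pd) := by
    have := sub_pos.2 hq; positivity
  have hΛs : p_q * f_sd * (1 - l.1 / primaryServiceRate f_pd f_ps p_a)
      = p_q * (f_sd * (primaryServiceRate f_pd f_ps p_a - l.1))
        / primaryServiceRate f_pd f_ps p_a := by
    rw [eq_div_iff hμ.ne']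
    field_simp
  have hΛp : l.1 * (f_sd * (1 - p_q) + p_a * f_ps * (1 - f_pd))
      < f_sd * (1 - p_q) * primaryServiceRate f_pd f_ps p_a ↔
      l.1 * (p_a * f_ps * (1 - f_pd))
        < (1 - p_q) * (f_sd * (primaryServiceRate f_pd f_ps p_a - l.1)) := by
    constructor <;> intro h <;> linarith
  simp only [stabilityRegion, maxPrimaryRate, maxSecondaryRate, Set.mem_ofPred_eq, lt_div_iff₀ hD,
    hΛs, lt_div_iff₀ hμ, hΛp]

lemma iUnion_stabilityRegion_eq_stabilityTriangle (hsd : 0 < f_sd)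
    (hb : 0 ≤ p_a * f_ps * (1 - f_pd)) (hμ : 0 < primaryServiceRate f_pd f_ps p_a) :
    ⋃ p_q ∈ Set.Ioo (0 : ℝ) 1, stabilityRegion f_pd f_ps f_sd p_q p_a
      = stabilityTriangle f_pd f_ps f_sd p_a := by
  ext ⟨x, y⟩
  simp only [Set.mem_iUnion, Set.mem_Ioo, exists_prop, mem_stabilityTriangle_iff hμ]
  constructor
  · rintro ⟨q, ⟨hq0, hq1⟩, hl⟩
    obtain ⟨hx, hxΛ, hy, hyΛ⟩ := (mem_stabilityRegion_iff hsd hb hμ hq1).1 hl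
    exact ⟨hx, hy, by linarith⟩
  · rintro ⟨hx, hy, hxy⟩
    set b := p_a * f_ps * (1 - f_pd)
    set μ := primaryServiceRate f_pd f_ps p_a
    have hE : 0 < f_sd * (μ - x) := by nlinarith
    obtain ⟨q, hqy, hqx⟩ :
        ∃ q, y * μ / (f_sd * (μ - x)) < q ∧ q < 1 - x * b / (f_sd * (μ - x)) :=
      exists_between (by rw [lt_sub_iff_add_lt, ← add_div, div_lt_one hE]; exact hxy)
    have hq0 : 0 < q := (by positivity : 0 < y * μ / (f_sd * (μ - x))).trans hqy
    have hq1 : q < 1 := hqx.trans_le (sub_le_self _ (by positivity))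
    rw [div_lt_iff₀ hE] at hqy
    rw [lt_sub_comm, div_lt_iff₀ hE] at hqx
    exact ⟨q, ⟨hq0, hq1⟩, (mem_stabilityRegion_iff hsd hb hμ hq1).2 ⟨hx, hqx, hy, hqy⟩⟩

end FixedAdmission

/-- The union of the stability regions over all (p_q, p_a) ∈ (0,1) × (0,1] equals
the stability region of any work-conserving cooperative scheme. -/
theorem union_stability_regions (f_pd f_ps f_sd : ℝ)
    (hpd : f_pd ∈ Set.Ioo (0 : ℝ) 1) (hps : f_ps ∈ Set.Ioo (0 : ℝ) 1)
    (hsd : f_sd ∈ Set.Ioo (0 : ℝ) 1) (hlt : f_pd < f_sd) :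
    (⋃ p_q ∈ Set.Ioo (0 : ℝ) 1, ⋃ p_a ∈ Set.Ioc (0 : ℝ) 1,
        stabilityRegion f_pd f_ps f_sd p_q p_a)
      = {l : ℝ × ℝ | 0 < l.1 ∧ 0 < l.2 ∧
          l.2 < f_sd - (f_sd + f_ps * (1 - f_pd)) / (f_pd + f_ps * (1 - f_pd)) * l.1} := by
  obtain ⟨hpd0, hpd1⟩ := hpd
  have hb {p_a : ℝ} (hp : p_a ∈ Set.Ioc (0 : ℝ) 1) : 0 ≤ p_a * f_ps * (1 - f_pd) := by
    have := hp.1.le; have := hps.1.le; have := sub_pos.2 hpd1; positivity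
  calc _ = ⋃ p_a ∈ Set.Ioc (0 : ℝ) 1, ⋃ p_q ∈ Set.Ioo (0 : ℝ) 1,
        stabilityRegion f_pd f_ps f_sd p_q p_a := Set.iUnion₂_comm _
    _ = ⋃ p_a ∈ Set.Ioc (0 : ℝ) 1, stabilityTriangle f_pd f_ps f_sd p_a :=
        Set.iUnion₂_congr fun p_a hp => iUnion_stabilityRegion_eq_stabilityTriangle hsd.1 (hb hp)
          (by unfold primaryServiceRate; linarith [hb hp])
    _ = stabilityTriangle f_pd f_ps f_sd 1 :=
        (Set.iUnion₂_subset fun p_a hp => stabilityTriangle_mono hpd0 hpd1.le hps.1.le hlt.le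
          hp.1.le hp.2).antisymm (Set.subset_biUnion_of_mem (Set.right_mem_Ioc.2 one_pos))
    _ = _ := by simp only [stabilityTriangle, primaryServiceRate, one_mul]
end

section
/- (Outer bound on the stability region) Fix channel success probabilities f_pd, f_ps, f_sd ∈ (0,1) with f_pd < f_sd, p_q ∈ (0,1), p_a ∈ (0,1], and a primary arrival rate λ_p with 0 < λ_p < Λ_p(p_q,p_a). Then the maximum achievable secondary arrival rate satisfies Λ_s(λ_p,p_q,p_a) < f_sd − ((f_sd + f_ps·(1−f_pd))/(f_pd + f_ps·(1−f_pd)))·λ_p. -/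
/-! Below Λ_p the secondary rate is beaten by the line of slope `(f_sd + p_a a) / μ_p(p_a)`, where
`a = f_ps (1 - f_pd)`; and since `t ↦ (f_sd + t) / (f_pd + t)` decreases when `f_pd ≤ f_sd`, that
slope is at least its value `(f_sd + a) / (f_pd + a)` at `p_a = 1`. -/

lemma antitoneOn_add_div_add {c d : ℝ} (hcd : c ≤ d) :
    AntitoneOn (fun t => (d + t) / (c + t)) (Set.Ioi (-c)) := by
  intro s hs t ht hst
  have hs' : 0 < c + s := neg_lt_iff_pos_add'.1 hs
  have ht' : 0 < c + t := neg_lt_iff_pos_add'.1 ht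
  rw [div_le_div_iff₀ ht' hs']
  nlinarith [mul_nonneg (sub_nonneg.2 hcd) (sub_nonneg.2 hst)]

lemma maxSecondaryRate_lt_of_lt_maxPrimaryRate {f_pd f_ps f_sd p_q p_a lp : ℝ}
    (hμ : 0 < primaryServiceRate f_pd f_ps p_a)
    (hden : 0 < f_sd * (1 - p_q) + p_a * f_ps * (1 - f_pd))
    (hlp : lp < maxPrimaryRate f_pd f_ps f_sd p_q p_a) :
    maxSecondaryRate f_pd f_ps f_sd lp p_q p_a
      < f_sd - (f_sd + p_a * f_ps * (1 - f_pd)) / primaryServiceRate f_pd f_ps p_a * lp := by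
  rw [maxPrimaryRate, lt_div_iff₀ hden] at hlp
  rw [maxSecondaryRate, ← sub_pos]
  -- the numerator of the gap is positive exactly when `lp < Λ_p`
  have gap_eq : f_sd - (f_sd + p_a * f_ps * (1 - f_pd)) / primaryServiceRate f_pd f_ps p_a * lp
      - p_q * f_sd * (1 - lp / primaryServiceRate f_pd f_ps p_a)
      = (f_sd * (1 - p_q) * primaryServiceRate f_pd f_ps p_a
          - lp * (f_sd * (1 - p_q) + p_a * f_ps * (1 - f_pd)))
        / primaryServiceRate f_pd f_ps p_a := by
    field_simp
    rw [primaryServiceRate]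
    ring
  rw [gap_eq]
  exact div_pos (by linarith) hμ

/-- Outer bound on the stability region. -/
theorem outer_bound_stability (f_pd f_ps f_sd p_q p_a lp : ℝ)
    (hpd : f_pd ∈ Set.Ioo (0 : ℝ) 1) (hps : f_ps ∈ Set.Ioo (0 : ℝ) 1)
    (hsd : f_sd ∈ Set.Ioo (0 : ℝ) 1) (hlt : f_pd < f_sd)
    (hq : p_q ∈ Set.Ioo (0 : ℝ) 1) (ha : p_a ∈ Set.Ioc (0 : ℝ) 1)
    (hlp0 : 0 < lp) (hlp : lp < maxPrimaryRate f_pd f_ps f_sd p_q p_a) :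
    maxSecondaryRate f_pd f_ps f_sd lp p_q p_a
      < f_sd - (f_sd + f_ps * (1 - f_pd)) / (f_pd + f_ps * (1 - f_pd)) * lp := by
  obtain ⟨hpd0, hpd1⟩ := hpd
  obtain ⟨ha0, ha1⟩ := ha
  have hsuccess : 0 < f_ps * (1 - f_pd) := mul_pos hps.1 (sub_pos.2 hpd1)
  have hadmit : 0 < p_a * f_ps * (1 - f_pd) := by rw [mul_assoc]; positivity
  have hadmit_le : p_a * f_ps * (1 - f_pd) ≤ f_ps * (1 - f_pd) := by
    rw [mul_assoc]; exact mul_le_of_le_one_left hsuccess.le ha1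
  have hμ : 0 < primaryServiceRate f_pd f_ps p_a := by rw [primaryServiceRate]; positivity
  have hden : 0 < f_sd * (1 - p_q) + p_a * f_ps * (1 - f_pd) :=
    add_pos (mul_pos hsd.1 (sub_pos.2 hq.2)) hadmit
  calc maxSecondaryRate f_pd f_ps f_sd lp p_q p_a
      < f_sd - (f_sd + p_a * f_ps * (1 - f_pd)) / primaryServiceRate f_pd f_ps p_a * lp :=
        maxSecondaryRate_lt_of_lt_maxPrimaryRate hμ hden hlp
    _ ≤ f_sd - (f_sd + f_ps * (1 - f_pd)) / (f_pd + f_ps * (1 - f_pd)) * lp := by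
        gcongr f_sd - ?_ * lp
        exact antitoneOn_add_div_add hlt.le (Set.mem_Ioi.2 (by linarith))
          (Set.mem_Ioi.2 (by linarith)) hadmit_le
end

section
/- (Feasible set characterization) Fix channel success probabilities f_pd, f_ps, f_sd ∈ (0,1), an admission probability p_a ∈ (0,1], and arrival rates λ_p, λ_s with λ_s > 0 and 0 < λ_p < μ_p(p_a). Define p_q^l = λ_s·μ_p(p_a)/(f_sd·(μ_p(p_a) − λ_p)) and p_q^u = 1 − λ_p·p_a·f_ps·(1−f_pd)/(f_sd·(μ_p(p_a) − λ_p)). Then for every p_q ∈ (0,1): the two stability conditions λ_p < Λ_p(p_q,p_a) and λ_s < Λ_s(λ_p,p_q,p_a) both hold if and only if p_q^l < p_q < p_q^u. -/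
/-! Both stability conditions are linear in `p_q` once their positive denominators are cleared:
with `c = p_a f_ps (1 - f_pd)`, `μ = f_pd + c` and `D = f_sd (μ - λ_p)`, the primary condition
`λ_p (f_sd (1 - p_q) + c) < f_sd (1 - p_q) μ` rearranges to `λ_p c < (1 - p_q) D`, and the secondary
one is `λ_s < p_q D / μ`. -/

section StabilityConditions

variable {f_pd f_ps f_sd p_a p_q lp ls : ℝ}

lemma primaryServiceRate_pos (hpd0 : 0 < f_pd) (hpd1 : f_pd ≤ 1) (hps : 0 ≤ f_ps)
    (ha : 0 ≤ p_a) : 0 < primaryServiceRate f_pd f_ps p_a :=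
  add_pos_of_pos_of_nonneg hpd0 (mul_nonneg (mul_nonneg ha hps) (sub_nonneg.2 hpd1))

lemma lt_maxPrimaryRate_iff (hsd : 0 < f_sd) (hq : p_q < 1)
    (hc : 0 ≤ p_a * f_ps * (1 - f_pd)) (hlp : lp < primaryServiceRate f_pd f_ps p_a) :
    lp < maxPrimaryRate f_pd f_ps f_sd p_q p_a ↔
      p_q < 1 - lp * p_a * f_ps * (1 - f_pd) /
        (f_sd * (primaryServiceRate f_pd f_ps p_a - lp)) := by
  have hD : 0 < f_sd * (primaryServiceRate f_pd f_ps p_a - lp) :=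
    mul_pos hsd (sub_pos.2 hlp)
  have hB : 0 < f_sd * (1 - p_q) + p_a * f_ps * (1 - f_pd) :=
    add_pos_of_pos_of_nonneg (mul_pos hsd (sub_pos.2 hq)) hc
  rw [maxPrimaryRate, lt_div_iff₀ hB, lt_sub_comm, div_lt_iff₀ hD, primaryServiceRate]
  constructor <;> intro h <;> linarith

lemma maxSecondaryRate_eq (hμ : primaryServiceRate f_pd f_ps p_a ≠ 0) :
    maxSecondaryRate f_pd f_ps f_sd lp p_q p_a =
      p_q * (f_sd * (primaryServiceRate f_pd f_ps p_a - lp)) /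
        primaryServiceRate f_pd f_ps p_a := by
  rw [maxSecondaryRate]
  field_simp

lemma lt_maxSecondaryRate_iff (hsd : 0 < f_sd) (hμ : 0 < primaryServiceRate f_pd f_ps p_a)
    (hlp : lp < primaryServiceRate f_pd f_ps p_a) :
    ls < maxSecondaryRate f_pd f_ps f_sd lp p_q p_a ↔
      ls * primaryServiceRate f_pd f_ps p_a /
        (f_sd * (primaryServiceRate f_pd f_ps p_a - lp)) < p_q := by
  rw [maxSecondaryRate_eq hμ.ne', lt_div_iff₀ hμ, div_lt_iff₀ (mul_pos hsd (sub_pos.2 hlp))]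

end StabilityConditions

theorem feasible_set_characterization_general (f_pd f_ps f_sd p_a lp ls : ℝ)
    (hpd : f_pd ∈ Set.Ioo (0 : ℝ) 1) (hps : f_ps ∈ Set.Ioo (0 : ℝ) 1)
    (hsd : f_sd ∈ Set.Ioo (0 : ℝ) 1) (ha : p_a ∈ Set.Ioc (0 : ℝ) 1)
    (hlp : lp < primaryServiceRate f_pd f_ps p_a) :
    ∀ p_q ∈ Set.Ioo (0 : ℝ) 1,
      (lp < maxPrimaryRate f_pd f_ps f_sd p_q p_a ∧
        ls < maxSecondaryRate f_pd f_ps f_sd lp p_q p_a)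
      ↔ (ls * primaryServiceRate f_pd f_ps p_a /
            (f_sd * (primaryServiceRate f_pd f_ps p_a - lp)) < p_q ∧
          p_q < 1 - lp * p_a * f_ps * (1 - f_pd) /
            (f_sd * (primaryServiceRate f_pd f_ps p_a - lp))) := by
  intro p_q ⟨_, hq1⟩
  have hc : 0 ≤ p_a * f_ps * (1 - f_pd) :=
    mul_nonneg (mul_nonneg ha.1.le hps.1.le) (sub_nonneg.2 hpd.2.le)
  have hμ := primaryServiceRate_pos hpd.1 hpd.2.le hps.1.le ha.1.le
  rw [lt_maxPrimaryRate_iff hsd.1 hq1 hc hlp, lt_maxSecondaryRate_iff hsd.1 hμ hlp, and_comm]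

/-- Feasible set characterization: the two stability conditions hold iff
p_q lies strictly between the lower and upper feasibility bounds. -/
theorem feasible_set_characterization (f_pd f_ps f_sd p_a lp ls : ℝ)
    (hpd : f_pd ∈ Set.Ioo (0 : ℝ) 1) (hps : f_ps ∈ Set.Ioo (0 : ℝ) 1)
    (hsd : f_sd ∈ Set.Ioo (0 : ℝ) 1) (ha : p_a ∈ Set.Ioc (0 : ℝ) 1)
    (hls : 0 < ls) (hlp0 : 0 < lp) (hlp : lp < primaryServiceRate f_pd f_ps p_a) :
    ∀ p_q ∈ Set.Ioo (0 : ℝ) 1,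
      (lp < maxPrimaryRate f_pd f_ps f_sd p_q p_a ∧
        ls < maxSecondaryRate f_pd f_ps f_sd lp p_q p_a)
      ↔ (ls * primaryServiceRate f_pd f_ps p_a /
            (f_sd * (primaryServiceRate f_pd f_ps p_a - lp)) < p_q ∧
          p_q < 1 - lp * p_a * f_ps * (1 - f_pd) /
            (f_sd * (primaryServiceRate f_pd f_ps p_a - lp))) :=
  feasible_set_characterization_general f_pd f_ps f_sd p_a lp ls hpd hps hsd ha hlp
end
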